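/- Let ζ ∈ ℂ and r, s > 0 satisfy r + |ζ| ≤ 1, s ≤ 1, and r + s < |ζ|. Then for all n, m ∈ ℕ, ∫∫_{𝔻×𝔻} [r·s/((r·conj(z) + ζ) − s·conj(w))²]·(n+1)·zⁿ·(m+1)·wᵐ dμ(z) dμ(w) = (−1)ⁿ · r^{n+1} · s^{m+1} · (n+m+1)!/(n!·m!) · ζ^{−n−m−2}. -/

import Mathlib

/-!
Expanding `1 / (b - c z̄)^(j+1) = ∑ₖ C(k+j, j) cᵏ / b^(k+j+1) · z̄ᵏ`, which converges uniformly
on the disk when `|c| < |b|`, and integrating term by term against `zⁿ`, the orthogonality of the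
monomials `zⁿ z̄ᵏ` on the disk keeps only the term `k = n`:
`∫_𝔻 (n+1) zⁿ / (b - c z̄)^(j+1) dμ = C(n+j, j) cⁿ / b^(n+j+1)`.
By Fubini the double integral is this formula applied twice: in `w` with `b = r z̄ + ζ`, `c = s`,
`j = 1` (note `|r z̄ + ζ| ≥ |ζ| - r > s`), then in `z` with `b = ζ`, `c = -r`, `j = m + 1`.
-/

open MeasureTheory Complex Set

noncomputable section

/-- The open unit disk in ℂ. -/
def unitDisk : Set ℂ := {z : ℂ | ‖z‖ < 1}

/-- The normalized area measure `π⁻¹ · (2-dimensional Lebesgue measure)` on ℂ. -/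
def μB : Measure ℂ := (ENNReal.ofReal (Real.pi)⁻¹) • (volume : Measure ℂ)

open ComplexConjugate

instance : SFinite μB := by unfold μB; infer_instance

instance : IsFiniteMeasureOnCompacts μB :=
  IsFiniteMeasureOnCompacts.smul _ ENNReal.ofReal_ne_top

lemma unitDisk_eq_ball : unitDisk = Metric.ball 0 1 := by
  ext z; simp [unitDisk]

lemma measurableSet_unitDisk : MeasurableSet unitDisk :=
  unitDisk_eq_ball ▸ measurableSet_ball

lemma μB_unitDisk : μB unitDisk = 1 := by
  rw [unitDisk_eq_ball, μB, Measure.smul_apply, Complex.volume_ball, smul_eq_mul,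
    ENNReal.ofReal_one, one_pow, one_mul, ← ENNReal.ofReal_coe_nnreal, NNReal.coe_real_pi,
    ← ENNReal.ofReal_mul (by positivity), inv_mul_cancel₀ Real.pi_ne_zero, ENNReal.ofReal_one]

instance : IsFiniteMeasure (μB.restrict unitDisk) :=
  ⟨by simp [μB_unitDisk]⟩

lemma setIntegral_μB {E : Type*} [NormedAddCommGroup E] [NormedSpace ℝ E] (f : ℂ → E)
    (s : Set ℂ) : ∫ z in s, f z ∂μB = (Real.pi)⁻¹ • ∫ z in s, f z := by
  rw [μB, Measure.restrict_smul, integral_smul_measure, ENNReal.toReal_ofReal (by positivity)]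

lemma integral_Ioo_exp_int_mul_I (k : ℤ) :
    ∫ θ in Ioo (-Real.pi) Real.pi, exp (k * I * θ) = if k = 0 then 2 * (Real.pi : ℂ) else 0 := by
  rw [← integral_Ioc_eq_integral_Ioo,
    ← intervalIntegral.integral_of_le (by linarith [Real.pi_pos])]
  split_ifs with hk
  · simp [hk, two_mul]
  · have hkI : (k : ℂ) * I ≠ 0 := mul_ne_zero (by exact_mod_cast hk) I_ne_zero
    have hper : exp (k * I * ↑(-Real.pi)) = exp (k * I * Real.pi) := by
      rw [show (k : ℂ) * I * ↑(-Real.pi) = k * I * Real.pi - k * (2 * Real.pi * I) by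
        push_cast; ring, exp_sub, exp_int_mul_two_pi_mul_I, div_one]
    rw [integral_exp_mul_complex hkI, hper, sub_self, zero_div]

lemma integral_Ioo_zero_one_pow (N : ℕ) : ∫ ρ in Ioo (0 : ℝ) 1, (ρ : ℂ) ^ N = 1 / (N + 1) := by
  rw [← integral_Ioc_eq_integral_Ioo, ← intervalIntegral.integral_of_le zero_le_one]
  simp_rw [← ofReal_pow]
  rw [intervalIntegral.integral_ofReal, integral_pow]
  push_cast
  simp

lemma polarCoord_symm_eq_mul_exp (p : ℝ × ℝ) :
    Complex.polarCoord.symm p = p.1 * exp (p.2 * I) := by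
  rw [Complex.polarCoord_symm_apply, exp_mul_I, ← ofReal_cos, ← ofReal_sin]

lemma smul_indicator_unitDisk_polarCoord_symm (n k : ℕ) {ρ : ℝ} (hρ : 0 < ρ) (θ : ℝ) :
    ρ • (unitDisk.indicator (fun z => z ^ n * conj z ^ k) (Complex.polarCoord.symm (ρ, θ)))
      = (Ioo 0 1).indicator (fun ρ : ℝ => (ρ : ℂ) ^ (n + k + 1)) ρ
          * exp ((n - k : ℤ) * I * θ) := by
  have hmem : Complex.polarCoord.symm (ρ, θ) ∈ unitDisk ↔ ρ ∈ Ioo 0 1 := by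
    simp [unitDisk, abs_of_pos hρ, hρ]
  by_cases h : ρ ∈ Ioo 0 1
  · rw [indicator_of_mem (hmem.2 h), indicator_of_mem h, polarCoord_symm_eq_mul_exp, real_smul,
      map_mul, conj_ofReal, ← exp_conj, map_mul, conj_ofReal, conj_I, mul_pow, mul_pow,
      ← exp_nat_mul, ← exp_nat_mul]
    have hexp : exp (n * (θ * I)) * exp (k * (θ * -I)) = exp ((n - k : ℤ) * I * θ) := by
      rw [← exp_add]; push_cast; ring_nf
    linear_combination (ρ : ℂ) ^ (n + k + 1) * hexp
  · rw [indicator_of_notMem (mt hmem.1 h), indicator_of_notMem h, smul_zero, zero_mul]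

lemma integral_unitDisk_pow_mul_conj_pow (n k : ℕ) :
    ∫ z in unitDisk, z ^ n * conj z ^ k ∂μB = if n = k then 1 / ((n : ℂ) + 1) else 0 := by
  rw [setIntegral_μB, ← integral_indicator measurableSet_unitDisk,
    ← Complex.integral_comp_polarCoord_symm, polarCoord_target,
    setIntegral_congr_fun (measurableSet_Ioi.prod measurableSet_Ioo)
      (fun p hp => smul_indicator_unitDisk_polarCoord_symm n k hp.1 p.2),
    Measure.volume_eq_prod, setIntegral_prod_mul
      ((Ioo 0 1).indicator fun ρ : ℝ => (ρ : ℂ) ^ (n + k + 1))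
      (fun θ : ℝ => exp ((n - k : ℤ) * I * θ)), setIntegral_indicator measurableSet_Ioo,
    inter_eq_self_of_subset_right Ioo_subset_Ioi_self, integral_Ioo_zero_one_pow,
    integral_Ioo_exp_int_mul_I]
  simp only [sub_eq_zero, Nat.cast_inj]
  split_ifs with h
  · subst h
    have hπ : (Real.pi : ℂ) ≠ 0 := ofReal_ne_zero.2 Real.pi_ne_zero
    have hn : (n : ℂ) + 1 ≠ 0 := by exact_mod_cast n.succ_ne_zero
    rw [real_smul, ofReal_inv, show ((n + n + 1 : ℕ) : ℂ) + 1 = 2 * (n + 1) by push_cast; ring]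
    field_simp
  · simp

lemma hasSum_choose_mul_div_pow_mul_pow {𝕜 : Type*} [NormedField 𝕜] [CompleteSpace 𝕜]
    {b c w : 𝕜} (h : ‖c * w‖ < ‖b‖) (j : ℕ) :
    HasSum (fun k => (k + j).choose j * c ^ k / b ^ (k + j + 1) * w ^ k)
      (1 / (b - c * w) ^ (j + 1)) := by
  have hb : b ≠ 0 := norm_pos_iff.1 ((norm_nonneg _).trans_lt h)
  have hq : ‖c * w / b‖ < 1 := by rwa [norm_div, div_lt_one (norm_pos_iff.2 hb)]
  have hexp : 1 / (b - c * w) ^ (j + 1) = 1 / b ^ (j + 1) * (1 / (1 - c * w / b) ^ (j + 1)) := by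
    rw [one_div_mul_one_div, ← mul_pow, mul_sub, mul_one, mul_div_cancel₀ _ hb]
  have hterm (k : ℕ) : 1 / b ^ (j + 1) * ((k + j).choose j * (c * w / b) ^ k)
      = (k + j).choose j * c ^ k / b ^ (k + j + 1) * w ^ k := by
    rw [div_pow, mul_pow]
    field_simp
    ring
  simpa only [hexp, hterm] using
    (hasSum_choose_mul_geometric_of_norm_lt_one j hq).mul_left (1 / b ^ (j + 1))

lemma integral_unitDisk_pow_mul_of_hasSum {f : ℂ → ℂ} {a : ℕ → ℂ} (ha : Summable fun k => ‖a k‖)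
    (hf : ∀ z ∈ unitDisk, HasSum (fun k => a k * conj z ^ k) (f z)) (n : ℕ) :
    ∫ z in unitDisk, z ^ n * f z ∂μB = a n / (n + 1) := by
  have hbound (k : ℕ) (z : ℂ) (hz : z ∈ unitDisk) : ‖z ^ n * (a k * conj z ^ k)‖ ≤ ‖a k‖ := by
    have hz : ‖z‖ ≤ 1 := le_of_lt hz
    rw [norm_mul, norm_mul, norm_pow, norm_pow, Complex.norm_conj]
    calc ‖z‖ ^ n * (‖a k‖ * ‖z‖ ^ k) ≤ 1 * (‖a k‖ * 1) := by
          gcongr <;> exact pow_le_one₀ (norm_nonneg _) hz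
      _ = ‖a k‖ := by ring
  have hsum := hasSum_integral_of_dominated_convergence (μ := μB.restrict unitDisk)
    (F := fun k z => z ^ n * (a k * conj z ^ k)) (fun k _ => ‖a k‖)
    (fun k => by fun_prop)
    (fun k => (ae_restrict_iff' measurableSet_unitDisk).2 (ae_of_all _ (hbound k)))
    (ae_of_all _ fun _ => ha) (integrable_const _)
    ((ae_restrict_iff' measurableSet_unitDisk).2
      (ae_of_all _ fun z hz => (hf z hz).mul_left (z ^ n)))
  simp_rw [mul_left_comm _ (a _), integral_const_mul, integral_unitDisk_pow_mul_conj_pow] at hsum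
  have hterm : (fun k => a k * if n = k then 1 / ((n : ℂ) + 1) else 0)
      = fun k => if k = n then a n / (n + 1) else 0 := by
    ext k
    rcases eq_or_ne k n with rfl | hk
    · simp only [if_true, mul_one_div]
    · simp [hk, hk.symm]
  rw [hterm] at hsum
  exact hsum.unique (hasSum_ite_eq n _)

theorem integral_unitDisk_mul_pow_div_sub_mul_conj_pow {b c : ℂ} (h : ‖c‖ < ‖b‖) (j n : ℕ) :
    ∫ z in unitDisk, (n + 1) * z ^ n / (b - c * conj z) ^ (j + 1) ∂μB
      = (n + j).choose j * c ^ n / b ^ (n + j + 1) := by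
  set a : ℕ → ℂ := fun k => (k + j).choose j * c ^ k / b ^ (k + j + 1)
  have hexp (z : ℂ) (hz : z ∈ unitDisk) :
      HasSum (fun k => a k * conj z ^ k) (1 / (b - c * conj z) ^ (j + 1)) := by
    refine hasSum_choose_mul_div_pow_mul_pow ?_ j
    rw [norm_mul, Complex.norm_conj]
    exact (mul_le_of_le_one_right (norm_nonneg c) (le_of_lt hz)).trans_lt h
  have ha : Summable fun k => ‖a k‖ := by
    simpa [a, norm_div] using
      (hasSum_choose_mul_div_pow_mul_pow (w := (1 : ℝ)) (by simpa using h) j).summable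
  have hn : (n : ℂ) + 1 ≠ 0 := by exact_mod_cast n.succ_ne_zero
  have hsplit (z : ℂ) : (n + 1) * z ^ n / (b - c * conj z) ^ (j + 1)
      = (n + 1) * (z ^ n * (1 / (b - c * conj z) ^ (j + 1))) := by ring
  simp_rw [hsplit, integral_const_mul, integral_unitDisk_pow_mul_of_hasSum ha hexp n, a]
  field_simp

lemma sub_le_norm_mul_conj_add {r : ℝ} (hr : 0 ≤ r) {z : ℂ} (hz : ‖z‖ ≤ 1) (ζ : ℂ) :
    ‖ζ‖ - r ≤ ‖r * conj z + ζ‖ := by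
  have hrz : ‖(r : ℂ) * conj z‖ ≤ r := by
    rw [norm_mul, Complex.norm_conj, norm_real, Real.norm_of_nonneg hr]
    exact mul_le_of_le_one_right hr hz
  have := norm_sub_norm_le ζ (-(r * conj z))
  rw [norm_neg, sub_neg_eq_add, add_comm] at this
  linarith

def diskKernel (ζ : ℂ) (r s : ℝ) (z w : ℂ) : ℂ :=
  ((r : ℂ) * (s : ℂ)) / (((r : ℂ) * conj z + ζ) - (s : ℂ) * conj w) ^ 2

section DiskKernel

variable {ζ : ℂ} {r s : ℝ} (hr : 0 ≤ r) (hs : 0 ≤ s) (hsep : r + s < ‖ζ‖)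
include hr hs hsep

lemma norm_ofReal_lt_norm_mul_conj_add {z : ℂ} (hz : ‖z‖ ≤ 1) : ‖(s : ℂ)‖ < ‖r * conj z + ζ‖ := by
  rw [norm_real, Real.norm_of_nonneg hs]
  linarith [sub_le_norm_mul_conj_add hr hz ζ]

lemma continuousOn_diskKernel :
    ContinuousOn (fun p : ℂ × ℂ => diskKernel ζ r s p.1 p.2)
      (Metric.closedBall 0 1 ×ˢ Metric.closedBall 0 1) := by
  refine continuousOn_const.div (by fun_prop) fun p hp => pow_ne_zero 2 <| sub_ne_zero.2 fun h => ?_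
  rw [mem_prod, mem_closedBall_zero_iff, mem_closedBall_zero_iff] at hp
  refine (norm_ofReal_lt_norm_mul_conj_add hr hs hsep hp.1).not_ge ?_
  rw [h, norm_mul, Complex.norm_conj]
  exact mul_le_of_le_one_right (norm_nonneg _) hp.2

lemma integrableOn_diskKernel_mul_pow_mul_pow (n m : ℕ) :
    IntegrableOn
      (fun p : ℂ × ℂ => diskKernel ζ r s p.1 p.2 * ((n + 1) * p.1 ^ n) * ((m + 1) * p.2 ^ m))
      (unitDisk ×ˢ unitDisk) (μB.prod μB) := by
  have hsub : unitDisk ⊆ Metric.closedBall 0 1 := unitDisk_eq_ball ▸ Metric.ball_subset_closedBall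
  refine (ContinuousOn.integrableOn_compact ((isCompact_closedBall 0 1).prod
    (isCompact_closedBall 0 1)) ?_).mono_set (prod_mono hsub hsub)
  exact ((continuousOn_diskKernel hr hs hsep).mul (by fun_prop)).mul (by fun_prop)

lemma integral_diskKernel_mul_pow_mul_pow {z : ℂ} (hz : z ∈ unitDisk) (n m : ℕ) :
    ∫ w in unitDisk, diskKernel ζ r s z w * ((n + 1) * z ^ n) * ((m + 1) * w ^ m) ∂μB
      = r * s * (m + 1) * s ^ m * ((n + 1) * z ^ n / (ζ - (-r) * conj z) ^ (m + 1 + 1)) := by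
  have hw := integral_unitDisk_mul_pow_div_sub_mul_conj_pow
    (norm_ofReal_lt_norm_mul_conj_add hr hs hsep (le_of_lt hz)) 1 m
  simp only [Nat.choose_one_right, Nat.cast_add, Nat.cast_one] at hw
  calc _ = r * s * ((n + 1) * z ^ n) * ∫ w in unitDisk,
        (m + 1) * w ^ m / ((r * conj z + ζ) - s * conj w) ^ (1 + 1) ∂μB := by
        rw [← integral_const_mul]
        exact congrArg _ (funext fun w => by rw [diskKernel]; ring)
    _ = _ := by rw [hw]; ring

end DiskKernel

lemma choose_mul_eq_factorial_div (n m : ℕ) :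
    ((n + (m + 1)).choose (m + 1) : ℂ) * (m + 1)
      = (n + m + 1).factorial / (n.factorial * m.factorial) := by
  have h := Nat.add_choose_mul_factorial_mul_factorial n (m + 1)
  rw [Nat.factorial_succ] at h
  rw [eq_div_iff (by simp [Nat.factorial_ne_zero]), show n + m + 1 = n + (m + 1) from rfl, ← h]
  push_cast
  ring

theorem statement_19_general (ζ : ℂ) (r s : ℝ) (hr : 0 < r) (hs : 0 < s)
    (hsep : r + s < ‖ζ‖) :
    ∀ n m : ℕ,
      ∫ p in unitDisk ×ˢ unitDisk,
          (((r : ℂ) * (s : ℂ)) /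
              (((r : ℂ) * (starRingEnd ℂ) p.1 + ζ) - (s : ℂ) * (starRingEnd ℂ) p.2) ^ 2)
            * (((n : ℂ) + 1) * p.1 ^ n) * (((m : ℂ) + 1) * p.2 ^ m) ∂(μB.prod μB)
        = (-1 : ℂ) ^ n * (r : ℂ) ^ (n + 1) * (s : ℂ) ^ (m + 1)
            * ((Nat.factorial (n + m + 1) : ℂ) / ((Nat.factorial n : ℂ) * (Nat.factorial m : ℂ)))
            * ζ ^ (-(n : ℤ) - (m : ℤ) - 2) := by
  intro n m
  have hζ : ζ ≠ 0 := norm_pos_iff.1 (by linarith)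
  have hr_lt : ‖-(r : ℂ)‖ < ‖ζ‖ := by
    rw [norm_neg, norm_real, Real.norm_of_nonneg hr.le]; linarith
  calc _ = ∫ z in unitDisk, ∫ w in unitDisk,
        diskKernel ζ r s z w * ((n + 1) * z ^ n) * ((m + 1) * w ^ m) ∂μB ∂μB :=
        setIntegral_prod _ (integrableOn_diskKernel_mul_pow_mul_pow hr.le hs.le hsep n m)
    _ = ∫ z in unitDisk, r * s * (m + 1) * s ^ m
          * ((n + 1) * z ^ n / (ζ - (-r) * conj z) ^ (m + 1 + 1)) ∂μB :=
        setIntegral_congr_fun measurableSet_unitDisk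
          fun z hz => integral_diskKernel_mul_pow_mul_pow hr.le hs.le hsep hz n m
    _ = _ := by
      rw [integral_const_mul, integral_unitDisk_mul_pow_div_sub_mul_conj_pow hr_lt (m + 1) n,
        ← choose_mul_eq_factorial_div,
        show -(n : ℤ) - m - 2 = -((n + (m + 1) + 1 : ℕ) : ℤ) by push_cast; ring,
        zpow_neg, zpow_natCast, neg_pow]
      field_simp
      ring

/-- For `r, s > 0` with `r + |ζ| ≤ 1`, `s ≤ 1`, `r + s < |ζ|`, and all `n, m ∈ ℕ`:
`∫∫_{𝔻×𝔻} [rs/((r·conj z + ζ) − s·conj w)²]·(n+1)zⁿ·(m+1)wᵐ dμ dμ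
  = (−1)ⁿ r^{n+1} s^{m+1} (n+m+1)!/(n!m!) ζ^{−n−m−2}`. -/
theorem statement_19 (ζ : ℂ) (r s : ℝ) (hr : 0 < r) (hs : 0 < s)
    (hrζ : r + ‖ζ‖ ≤ 1) (hs1 : s ≤ 1)
    (hsep : r + s < ‖ζ‖) :
    ∀ n m : ℕ,
      ∫ p in unitDisk ×ˢ unitDisk,
          (((r : ℂ) * (s : ℂ)) /
              (((r : ℂ) * (starRingEnd ℂ) p.1 + ζ) - (s : ℂ) * (starRingEnd ℂ) p.2) ^ 2)
            * (((n : ℂ) + 1) * p.1 ^ n) * (((m : ℂ) + 1) * p.2 ^ m) ∂(μB.prod μB)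
        = (-1 : ℂ) ^ n * (r : ℂ) ^ (n + 1) * (s : ℂ) ^ (m + 1)
            * ((Nat.factorial (n + m + 1) : ℂ) / ((Nat.factorial n : ℂ) * (Nat.factorial m : ℂ)))
            * ζ ^ (-(n : ℤ) - (m : ℤ) - 2) :=
  statement_19_general ζ r s hr hs hsep
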